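/- Let S and T be operator systems with complete norms, Φ : S → T a unital completely positive surjection, and define C_n = { y ∈ M_n(T) : ∀ε>0, ∃x ∈ M_n(S), x + εI_n ⊗ 1_S ∈ M_n(S)^+ and Φ_n(x) = y }. Then C_n is a norm-closed cone contained in M_n(T)^+ and containing Φ_n(M_n(S)^+). -/

import Mathlib

open scoped TensorProduct Kronecker ComplexOrder Matrix

noncomputable section

/-- Conjugation `α X α*` of an operator-valued matrix by a scalar matrix. -/
def mconj {V : Type} [AddCommGroup V] [Module ℂ V] {m n : Type} [Fintype m]
    (α : Matrix n m ℂ) (X : Matrix m m V) : Matrix n n V :=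
  Matrix.of fun i j => ∑ k, ∑ l, (α i k * star (α j l)) • X k l

/-- Entrywise star (conjugate transpose) of an operator-valued matrix. -/
def mstar {V : Type} [AddCommGroup V] [StarAddMonoid V] {m n : Type}
    (X : Matrix m n V) : Matrix n m V :=
  Matrix.of fun i j => star (X j i)

/-- An abstract operator system: a matrix ordered complex ∗-vector space with an
Archimedean matrix order unit (Choi–Effros). -/
structure OpSys (V : Type) [AddCommGroup V] [Module ℂ V] [StarAddMonoid V]
    [StarModule ℂ V] : Type 1 where
  pos : ∀ (ι : Type) [Fintype ι] [DecidableEq ι], Set (Matrix ι ι V)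
  unit : V
  unit_star : star unit = unit
  pos_star : ∀ (ι : Type) [Fintype ι] [DecidableEq ι] (X : Matrix ι ι V),
    X ∈ pos ι → mstar X = X
  pos_add : ∀ (ι : Type) [Fintype ι] [DecidableEq ι] (X Y : Matrix ι ι V),
    X ∈ pos ι → Y ∈ pos ι → X + Y ∈ pos ι
  pos_conj : ∀ (ι κ : Type) [Fintype ι] [DecidableEq ι] [Fintype κ] [DecidableEq κ]
    (α : Matrix κ ι ℂ) (X : Matrix ι ι V), X ∈ pos ι → mconj α X ∈ pos κ
  unit_pos : ∀ (ι : Type) [Fintype ι] [DecidableEq ι],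
    Matrix.diagonal (fun _ => unit) ∈ pos ι
  archimedean : ∀ (ι : Type) [Fintype ι] [DecidableEq ι] (X : Matrix ι ι V),
    mstar X = X →
    (∀ ε : ℝ, 0 < ε → X + (ε : ℂ) • Matrix.diagonal (fun _ => unit) ∈ pos ι) →
    X ∈ pos ι
  order_unit : ∀ (ι : Type) [Fintype ι] [DecidableEq ι] (X : Matrix ι ι V),
    mstar X = X → ∃ r : ℝ, 0 < r ∧
      (r : ℂ) • Matrix.diagonal (fun _ => unit) - X ∈ pos ι
  proper : ∀ x : V, Matrix.of (fun _ _ : Fin 1 => x) ∈ pos (Fin 1) →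
    Matrix.of (fun _ _ : Fin 1 => -x) ∈ pos (Fin 1) → x = 0

variable {V W : Type}

/-- The matrix norms of an operator system, described as a predicate `‖X‖ ≤ r`,
determined by the order structure via `2×2` block matrices. -/
def OpSys.normLE [AddCommGroup V] [Module ℂ V] [StarAddMonoid V] [StarModule ℂ V]
    (𝒮 : OpSys V) {ι κ : Type} [Fintype ι] [DecidableEq ι] [Fintype κ] [DecidableEq κ]
    (X : Matrix ι κ V) (r : ℝ) : Prop :=
  Matrix.fromBlocks ((r : ℂ) • Matrix.diagonal (fun _ => 𝒮.unit)) X (mstar X)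
    ((r : ℂ) • Matrix.diagonal (fun _ => 𝒮.unit)) ∈ 𝒮.pos (ι ⊕ κ)

/-- The norm of a single element of an operator system. -/
def OpSys.elemNormLE [AddCommGroup V] [Module ℂ V] [StarAddMonoid V] [StarModule ℂ V]
    (𝒮 : OpSys V) (x : V) (r : ℝ) : Prop :=
  𝒮.normLE (Matrix.of fun _ _ : Fin 1 => x) r

/-- Completeness of the norm of an operator system. -/
def OpSys.CompleteNorms [AddCommGroup V] [Module ℂ V] [StarAddMonoid V] [StarModule ℂ V]
    (𝒮 : OpSys V) : Prop :=
  ∀ u : ℕ → V,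
    (∀ ε : ℝ, 0 < ε → ∃ N : ℕ, ∀ p ≥ N, ∀ q ≥ N, 𝒮.elemNormLE (u p - u q) ε) →
    ∃ x : V, ∀ ε : ℝ, 0 < ε → ∃ N : ℕ, ∀ p ≥ N, 𝒮.elemNormLE (u p - x) ε

section Maps

variable [AddCommGroup V] [Module ℂ V] [StarAddMonoid V] [StarModule ℂ V]
variable [AddCommGroup W] [Module ℂ W] [StarAddMonoid W] [StarModule ℂ W]

/-- Completely positive map between operator systems. -/
def IsCPmap (𝒮 : OpSys V) (𝒯 : OpSys W) (Φ : V →ₗ[ℂ] W) : Prop :=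
  ∀ (ι : Type) [Fintype ι] [DecidableEq ι], ∀ X ∈ 𝒮.pos ι, X.map Φ ∈ 𝒯.pos ι

/-- Unital completely positive map between operator systems. -/
def IsUCPmap (𝒮 : OpSys V) (𝒯 : OpSys W) (Φ : V →ₗ[ℂ] W) : Prop :=
  Φ 𝒮.unit = 𝒯.unit ∧ IsCPmap 𝒮 𝒯 Φ

/-- (Unital) complete order embedding between operator systems. -/
def IsCOEmbedding (𝒮 : OpSys V) (𝒯 : OpSys W) (Φ : V →ₗ[ℂ] W) : Prop :=
  Φ 𝒮.unit = 𝒯.unit ∧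
  ∀ (ι : Type) [Fintype ι] [DecidableEq ι], ∀ X : Matrix ι ι V,
    X ∈ 𝒮.pos ι ↔ X.map Φ ∈ 𝒯.pos ι

/-- Complete order quotient map between operator systems: a unital completely positive
surjection such that every positive `Q` admits, for every `ε > 0`, a lift `P` with
`P + ε Iₙ ⊗ 1` positive. -/
def IsCOQuotientMap (𝒮 : OpSys V) (𝒯 : OpSys W) (Φ : V →ₗ[ℂ] W) : Prop :=
  IsUCPmap 𝒮 𝒯 Φ ∧ Function.Surjective Φ ∧
  ∀ (ι : Type) [Fintype ι] [DecidableEq ι], ∀ Q ∈ 𝒯.pos ι, ∀ ε : ℝ, 0 < ε →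
    ∃ P : Matrix ι ι V,
      P + (ε : ℂ) • Matrix.diagonal (fun _ => 𝒮.unit) ∈ 𝒮.pos ι ∧ P.map Φ = Q

end Maps

section Tensor

variable [AddCommGroup V] [Module ℂ V] [AddCommGroup W] [Module ℂ W]

/-- Elementary tensor of operator-valued matrices. -/
def tkron {ι κ : Type} (P : Matrix ι ι V) (Q : Matrix κ κ W) :
    Matrix (ι × κ) (ι × κ) (V ⊗[ℂ] W) :=
  Matrix.of fun p q => P p.1 q.1 ⊗ₜ[ℂ] Q p.2 q.2

/-- The cone `D_n^{max}` : all `α (P ⊗ Q) α*`. -/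
def Dmax (posV : ∀ (ι : Type) [Fintype ι] [DecidableEq ι], Set (Matrix ι ι V))
    (posW : ∀ (ι : Type) [Fintype ι] [DecidableEq ι], Set (Matrix ι ι W))
    (ι : Type) [Fintype ι] [DecidableEq ι] : Set (Matrix ι ι (V ⊗[ℂ] W)) :=
  { Z | ∃ (k l : ℕ) (P : Matrix (Fin k) (Fin k) V) (Q : Matrix (Fin l) (Fin l) W)
      (α : Matrix ι (Fin k × Fin l) ℂ),
      P ∈ posV (Fin k) ∧ Q ∈ posW (Fin l) ∧ Z = mconj α (tkron P Q) }

/-- The positive cones of the maximal operator system tensor product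
(the Archimedeanization of `D^{max}`). -/
def maxPos (posV : ∀ (ι : Type) [Fintype ι] [DecidableEq ι], Set (Matrix ι ι V)) (uV : V)
    (posW : ∀ (ι : Type) [Fintype ι] [DecidableEq ι], Set (Matrix ι ι W)) (uW : W)
    (ι : Type) [Fintype ι] [DecidableEq ι] : Set (Matrix ι ι (V ⊗[ℂ] W)) :=
  { Z | ∀ ε : ℝ, 0 < ε →
      Z + (ε : ℂ) • Matrix.diagonal (fun _ => uV ⊗ₜ[ℂ] uW) ∈ Dmax posV posW ι }

/-- The ground level positive cone of the maximal tensor product. -/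
def maxPos1 (posV : ∀ (ι : Type) [Fintype ι] [DecidableEq ι], Set (Matrix ι ι V)) (uV : V)
    (posW : ∀ (ι : Type) [Fintype ι] [DecidableEq ι], Set (Matrix ι ι W)) (uW : W) :
    Set (V ⊗[ℂ] W) :=
  { z | Matrix.of (fun _ _ : Fin 1 => z) ∈ maxPos posV uV posW uW (Fin 1) }

end Tensor

/-- Positivity in matrix algebras over a (C*-)algebra: elements of the form `Y* Y`. -/
def cstarPos {A : Type} [Ring A] [StarRing A] (ι : Type) [Fintype ι] :
    Set (Matrix ι ι A) :=
  { X | ∃ Y : Matrix ι ι A, X = Yᴴ * Y }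

/-- The dual space of an operator system. -/
abbrev DualV (V : Type) [AddCommGroup V] [Module ℂ V] := V →ₗ[ℂ] ℂ

/-- The double dual space. -/
abbrev BiDual (V : Type) [AddCommGroup V] [Module ℂ V] := DualV (DualV V)

section Dual

variable [AddCommGroup V] [Module ℂ V]

/-- Pairing of a matrix of functionals with an operator-valued matrix. -/
def ampMat {ι κ m : Type} (f : Matrix ι κ (DualV V)) (X : Matrix m m V) :
    Matrix (m × ι) (m × κ) ℂ :=
  Matrix.of fun p q => f p.2 q.2 (X p.1 q.1)

/-- The matrix ordering on the dual space: `Mₙ(S*)⁺ = CP(S, Mₙ)`. -/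
def dualPos (posV : ∀ (ι : Type) [Fintype ι] [DecidableEq ι], Set (Matrix ι ι V))
    (ι : Type) [Fintype ι] [DecidableEq ι] : Set (Matrix ι ι (DualV V)) :=
  { f | ∀ (m : Type) [Fintype m] [DecidableEq m], ∀ X ∈ posV m, (ampMat f X).PosSemidef }

/-- The matrix ordering on the double dual. -/
def bidualPos (posV : ∀ (ι : Type) [Fintype ι] [DecidableEq ι], Set (Matrix ι ι V))
    (ι : Type) [Fintype ι] [DecidableEq ι] : Set (Matrix ι ι (BiDual V)) :=
  { F | ∀ (κ : Type) [Fintype κ] [DecidableEq κ], ∀ f ∈ dualPos posV κ,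
      (Matrix.of fun (p q : ι × κ) => F p.1 q.1 (f p.2 q.2)).PosSemidef }

end Dual

/-- `‖M‖ ≤ r` for scalar matrices, via positivity of a `2×2` block matrix. -/
def cNormLE {ι κ : Type} [Fintype ι] [DecidableEq ι] [Fintype κ] [DecidableEq κ]
    (M : Matrix ι κ ℂ) (r : ℝ) : Prop :=
  (Matrix.fromBlocks ((r : ℂ) • 1) M Mᴴ ((r : ℂ) • 1)).PosSemidef

section DualNorm

/-- The matrix norm data of an operator system, in partially applicable form. -/
def OpSys.normData [AddCommGroup V] [Module ℂ V] [StarAddMonoid V] [StarModule ℂ V]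
    (𝒮 : OpSys V) (ι κ : Type) [Fintype ι] [DecidableEq ι] [Fintype κ] [DecidableEq κ] :
    Matrix ι κ V → ℝ → Prop :=
  fun X r => 𝒮.normLE X r

/-- The matrix cones of matrices over a C*-algebra, in partially applicable form. -/
def cstarPosData (A : Type) [Ring A] [StarRing A]
    (ι : Type) [Fintype ι] [DecidableEq ι] : Set (Matrix ι ι A) :=
  cstarPos ι

/-- The completely bounded norm (as a predicate `‖f‖_cb ≤ r`) on matrices over the
dual of a space with matrix norm data `normV`; this is the operator space dual
matrix norm. -/
def dualNormLE [AddCommGroup V] [Module ℂ V]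
    (normV : ∀ (ι κ : Type) [Fintype ι] [DecidableEq ι] [Fintype κ] [DecidableEq κ],
      Matrix ι κ V → ℝ → Prop)
    (ι κ : Type) [Fintype ι] [DecidableEq ι] [Fintype κ] [DecidableEq κ]
    (f : Matrix ι κ (DualV V)) (r : ℝ) : Prop :=
  ∀ (m : Type) [Fintype m] [DecidableEq m], ∀ X : Matrix m m V,
    normV m m X 1 → cNormLE (ampMat f X) r

end DualNorm

section Werner

variable {U : Type} [AddCommGroup U] [Module ℂ U]

/-- Werner's unitization cone on `U ⊕ ℂ` for a matrix ordered operator space `U`,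
given by the matrix cones `posU` and matrix norms `normU` of `U` :
`X + A ∈ Mₙ(Ũ)⁺` iff `A ∈ Mₙ⁺` and
`φ((A+εIₙ)^{-1/2} X (A+εIₙ)^{-1/2}) ≥ -1` for every `ε > 0` and every positive
contractive functional `φ` on `Mₙ(U)`. -/
def wernerPos (posU : ∀ (ι : Type) [Fintype ι] [DecidableEq ι], Set (Matrix ι ι U))
    (normU : ∀ (ι κ : Type) [Fintype ι] [DecidableEq ι] [Fintype κ] [DecidableEq κ],
      Matrix ι κ U → ℝ → Prop)
    (ι : Type) [Fintype ι] [DecidableEq ι] : Set (Matrix ι ι (U × ℂ)) :=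
  { X | (Matrix.of fun i j => (X i j).2).PosSemidef ∧
      ∀ ε : ℝ, 0 < ε → ∀ B : Matrix ι ι ℂ, B.PosDef →
        B * B = Matrix.of (fun i j => (X i j).2) + (ε : ℂ) • 1 →
        ∀ φ : Matrix ι ι U →ₗ[ℂ] ℂ,
          (∀ g ∈ posU ι, 0 ≤ (φ g).re ∧ (φ g).im = 0) →
          (∀ (g : Matrix ι ι U) (r : ℝ), 0 ≤ r → normU ι ι g r → ‖φ g‖ ≤ r) →
          -1 ≤ (φ (mconj B⁻¹ (Matrix.of fun i j => (X i j).1))).re }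

end Werner

section MatrixMaps

variable [AddCommGroup V] [Module ℂ V] [AddCommGroup W] [Module ℂ W]

/-- Amplification of a matrix-algebra valued map evaluated on an operator matrix. -/
def blkMat {p : Type} (φ : V →ₗ[ℂ] Matrix p p ℂ) {ι : Type} (X : Matrix ι ι V) :
    Matrix (ι × p) (ι × p) ℂ :=
  Matrix.of fun q r => φ (X q.1 r.1) q.2 r.2

/-- Unital completely positive map into a matrix algebra, for raw matrix-cone data. -/
def UCPtoM {R : Type} [AddCommGroup R] [Module ℂ R]
    (posR : ∀ (ι : Type) [Fintype ι] [DecidableEq ι], Set (Matrix ι ι R)) (uR : R)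
    {p : Type} [Fintype p] [DecidableEq p] (φ : R →ₗ[ℂ] Matrix p p ℂ) : Prop :=
  φ uR = 1 ∧ ∀ (ι : Type) [Fintype ι] [DecidableEq ι], ∀ X ∈ posR ι, (blkMat φ X).PosSemidef

/-- Completely positive map from a matrix algebra into matrix-cone data. -/
def CPfromM {p : Type} [Fintype p] [DecidableEq p]
    (posW : ∀ (ι : Type) [Fintype ι] [DecidableEq ι], Set (Matrix ι ι W))
    (ψ : Matrix p p ℂ →ₗ[ℂ] W) : Prop :=
  ∀ (ι : Type) [Fintype ι] [DecidableEq ι] (B : Matrix ι ι (Matrix p p ℂ)),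
    (Matrix.of fun (q r : ι × p) => B q.1 r.1 q.2 r.2).PosSemidef →
    (Matrix.of fun i j => ψ (B i j)) ∈ posW ι

/-- The pairing `φ ⊗ ψ : V ⊗ W → M_{p×q}` associated with matrix-algebra valued maps. -/
def kronPair {p q : Type} [Fintype p] [DecidableEq p] [Fintype q] [DecidableEq q]
    (φ : V →ₗ[ℂ] Matrix p p ℂ) (ψ : W →ₗ[ℂ] Matrix q q ℂ) :
    V ⊗[ℂ] W →ₗ[ℂ] Matrix (p × q) (p × q) ℂ :=
  TensorProduct.lift
    (LinearMap.mk₂ ℂ (fun v w => φ v ⊗ₖ ψ w)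
      (fun v v' w => by simp [map_add, Matrix.add_kronecker])
      (fun c v w => by simp [map_smul, Matrix.smul_kronecker])
      (fun v w w' => by simp [map_add, Matrix.kronecker_add])
      (fun c v w => by simp [map_smul, Matrix.kronecker_smul]))

/-- The ground level positive cone of the minimal operator system tensor product. -/
def minPos1 (posV : ∀ (ι : Type) [Fintype ι] [DecidableEq ι], Set (Matrix ι ι V)) (uV : V)
    (posW : ∀ (ι : Type) [Fintype ι] [DecidableEq ι], Set (Matrix ι ι W)) (uW : W) :
    Set (V ⊗[ℂ] W) :=
  { z | ∀ (k m : ℕ) (φ : V →ₗ[ℂ] Matrix (Fin k) (Fin k) ℂ)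
      (ψ : W →ₗ[ℂ] Matrix (Fin m) (Fin m) ℂ),
      UCPtoM posV uV φ → UCPtoM posW uW ψ → (kronPair φ ψ z).PosSemidef }

/-- The matrix level positive cones of the minimal operator system tensor product. -/
def minPosMat (posV : ∀ (ι : Type) [Fintype ι] [DecidableEq ι], Set (Matrix ι ι V)) (uV : V)
    (posW : ∀ (ι : Type) [Fintype ι] [DecidableEq ι], Set (Matrix ι ι W)) (uW : W)
    (ι : Type) [Fintype ι] [DecidableEq ι] : Set (Matrix ι ι (V ⊗[ℂ] W)) :=
  { Z | ∀ (k m : ℕ) (φ : V →ₗ[ℂ] Matrix (Fin k) (Fin k) ℂ)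
      (ψ : W →ₗ[ℂ] Matrix (Fin m) (Fin m) ℂ),
      UCPtoM posV uV φ → UCPtoM posW uW ψ →
      (Matrix.of fun (q r : ι × (Fin k × Fin m)) =>
        kronPair φ ψ (Z q.1 r.1) q.2 r.2).PosSemidef }

/-- The entry functionals of a matrix-algebra valued map. -/
def entryF {p : Type} (f : V →ₗ[ℂ] Matrix p p ℂ) (i j : p) : DualV V where
  toFun x := f x i j
  map_add' x y := by simp [map_add, Matrix.add_apply]
  map_smul' c x := by simp [map_smul, Matrix.smul_apply]

/-- Conjugation of a matrix-algebra valued map by a fixed scalar matrix. -/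
def conjMap {p : Type} [Fintype p] (B : Matrix p p ℂ) (f : V →ₗ[ℂ] Matrix p p ℂ) :
    V →ₗ[ℂ] Matrix p p ℂ where
  toFun x := B * f x * B
  map_add' x y := by simp [map_add, Matrix.mul_add, Matrix.add_mul]
  map_smul' c x := by simp [map_smul, Matrix.mul_smul, Matrix.smul_mul]

end MatrixMaps

/-- The weak expectation property, for raw matrix-cone data `(posV, uV)` on `V` :
the canonical inclusion into the bidual factors through some `B(H)`
(`H = ℓ²(Λ)`) by unital completely positive maps. -/
def HasWEP {V : Type} [AddCommGroup V] [Module ℂ V]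
    (posV : ∀ (ι : Type) [Fintype ι] [DecidableEq ι], Set (Matrix ι ι V)) (uV : V) : Prop :=
  ∃ (Λ : Type) (Φ : V →ₗ[ℂ] ((lp (fun _ : Λ => ℂ) 2) →L[ℂ] (lp (fun _ : Λ => ℂ) 2)))
    (Ψ : ((lp (fun _ : Λ => ℂ) 2) →L[ℂ] (lp (fun _ : Λ => ℂ) 2)) →ₗ[ℂ] BiDual V),
    Φ uV = 1 ∧
    (∀ (ι : Type) [Fintype ι] [DecidableEq ι], ∀ X ∈ posV ι, X.map Φ ∈ cstarPos ι) ∧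
    Ψ 1 = Module.Dual.eval ℂ V uV ∧
    (∀ (ι : Type) [Fintype ι] [DecidableEq ι],
      ∀ Y ∈ cstarPos (A := (lp (fun _ : Λ => ℂ) 2) →L[ℂ] (lp (fun _ : Λ => ℂ) 2)) ι,
        Y.map Ψ ∈ bidualPos posV ι) ∧
    (∀ x : V, Ψ (Φ x) = Module.Dual.eval ℂ V x)

end
/-- The set `C_n` of elements of `Mₙ(T)` admitting approximate positive lifts. -/
def liftCone {V W : Type}
    [AddCommGroup V] [Module ℂ V] [StarAddMonoid V] [StarModule ℂ V]
    [AddCommGroup W] [Module ℂ W] [StarAddMonoid W] [StarModule ℂ W]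
    (𝒮 : OpSys V) (𝒯 : OpSys W) (Φ : V →ₗ[ℂ] W) (n : ℕ) :
    Set (Matrix (Fin n) (Fin n) W) :=
  { y | ∀ ε : ℝ, 0 < ε → ∃ x : Matrix (Fin n) (Fin n) V,
      x + (ε : ℂ) • Matrix.diagonal (fun _ => 𝒮.unit) ∈ 𝒮.pos (Fin n) ∧
      x.map Φ = y }


/-!
An element `y` of `C_n` satisfies `y + ε 1 = Φₙ(x + ε 1) ≥ 0` for every `ε > 0`, so `y ≥ 0` by the
Archimedean property; the cone properties are immediate.

For closedness, `Mₙ(S)` and `Mₙ(T)` are Banach spaces for the matrix norms (completeness passes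
from the entries since `‖X‖ ≤ ∑ ‖X_ij‖`), and `Φₙ` is a contractive surjection between them. By the
open mapping theorem every selfadjoint `w ∈ Mₙ(T)` has a selfadjoint lift `h` with `‖h‖ ≤ C ‖w‖`,
and then `h + C ‖w‖ 1 ≥ 0`. If `u_k ∈ C_n` converge to `Y`, then `Y` is selfadjoint and
`Y = u_N + (Y - u_N)`; adding an approximately positive lift of `u_N` to a small selfadjoint lift
of `Y - u_N` shows `Y ∈ C_n`.
-/

open Matrix

section MatrixAlgebra

variable {V : Type} {ι κ ι' : Type}

lemma mstar_eq_conjTranspose [AddCommGroup V] [StarAddMonoid V] (X : Matrix ι κ V) :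
    mstar X = Xᴴ := rfl

lemma mstar_add [AddCommGroup V] [StarAddMonoid V] (X Y : Matrix ι κ V) :
    mstar (X + Y) = mstar X + mstar Y :=
  conjTranspose_add X Y

lemma mstar_sub [AddCommGroup V] [StarAddMonoid V] (X Y : Matrix ι κ V) :
    mstar (X - Y) = mstar X - mstar Y :=
  conjTranspose_sub X Y

variable [AddCommGroup V] [Module ℂ V]

def selMatrix [DecidableEq ι] (g : ι' → ι) (s : ι' → ℂ) : Matrix ι' ι ℂ :=
  of fun i k => if k = g i then s i else 0

lemma mconj_selMatrix [Fintype ι] [DecidableEq ι] (g : ι' → ι) (s : ι' → ℂ)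
    (X : Matrix ι ι V) :
    mconj (selMatrix g s) X = of fun i j => (s i * star (s j)) • X (g i) (g j) := by
  ext i j
  simp [mconj, selMatrix, ite_mul, mul_ite, ite_smul, apply_ite (starRingEnd ℂ)]

lemma mconj_add_selMatrix [Fintype ι] [DecidableEq ι] (g g' : ι' → ι) (s t : ι' → ℂ)
    (X : Matrix ι ι V) :
    mconj (selMatrix g s + selMatrix g' t) X = of fun i j =>
      (s i * star (s j)) • X (g i) (g j) + (s i * star (t j)) • X (g i) (g' j) +
      (t i * star (s j)) • X (g' i) (g j) + (t i * star (t j)) • X (g' i) (g' j) := by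
  ext i j
  simp only [mconj, selMatrix, Matrix.add_apply, of_apply, star_add, RCLike.star_def,
    apply_ite (starRingEnd ℂ), map_zero, mul_add, mul_ite, add_mul, ite_mul, zero_mul, mul_zero,
    add_smul, ite_smul, zero_smul, Finset.sum_add_distrib, Finset.sum_ite_eq', Finset.mem_univ,
    ↓reduceIte]
  abel

end MatrixAlgebra

namespace OpSys

variable {V : Type} [AddCommGroup V] [Module ℂ V] [StarAddMonoid V] [StarModule ℂ V]
variable (𝒮 : OpSys V) {ι κ : Type} [DecidableEq ι] [DecidableEq κ]

lemma conjTranspose_smul_unit (r : ℝ) :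
    ((r : ℂ) • diagonal fun _ : ι => 𝒮.unit)ᴴ = (r : ℂ) • diagonal fun _ => 𝒮.unit := by
  simp [diagonal_conjTranspose, Pi.star_def, 𝒮.unit_star]

def normBlock (X : Matrix ι κ V) (r : ℝ) : Matrix (ι ⊕ κ) (ι ⊕ κ) V :=
  fromBlocks ((r : ℂ) • diagonal fun _ => 𝒮.unit) X (mstar X) ((r : ℂ) • diagonal fun _ => 𝒮.unit)

variable {𝒮}

lemma mstar_normBlock (X : Matrix ι κ V) (r : ℝ) :
    mstar (𝒮.normBlock X r) = 𝒮.normBlock X r := by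
  simp only [normBlock, mstar_eq_conjTranspose, fromBlocks_conjTranspose,
    conjTranspose_conjTranspose, conjTranspose_smul_unit]

lemma normBlock_add (X Y : Matrix ι κ V) (r s : ℝ) :
    𝒮.normBlock (X + Y) (r + s) = 𝒮.normBlock X r + 𝒮.normBlock Y s := by
  simp [normBlock, mstar_eq_conjTranspose, fromBlocks_add, add_smul]

lemma normBlock_add_smul_unit (X : Matrix ι κ V) (r ε : ℝ) :
    𝒮.normBlock X r + (ε : ℂ) • diagonal (fun _ => 𝒮.unit) = 𝒮.normBlock X (r + ε) := by
  ext (i | i) (j | j) <;> simp [normBlock, diagonal_apply, add_smul]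

lemma normBlock_zero (r : ℝ) :
    𝒮.normBlock (0 : Matrix ι κ V) r = (r : ℂ) • diagonal fun _ => 𝒮.unit := by
  ext (i | i) (j | j) <;> simp [normBlock, diagonal_apply, mstar_eq_conjTranspose]

lemma normBlock_smul (X : Matrix ι κ V) {c : ℝ} (r : ℝ) :
    𝒮.normBlock ((c : ℂ) • X) (c * r) = (c : ℂ) • 𝒮.normBlock X r := by
  ext (i | i) (j | j) <;>
    simp [normBlock, mstar_eq_conjTranspose, smul_smul, -Complex.ofReal_mul, Complex.coe_smul]

variable [Fintype ι] [Fintype κ]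

variable (𝒮) in
lemma smul_mem_pos {r : ℝ} (hr : 0 ≤ r) {X : Matrix ι ι V} (hX : X ∈ 𝒮.pos ι) :
    (r : ℂ) • X ∈ 𝒮.pos ι := by
  have h := 𝒮.pos_conj ι ι (selMatrix id fun _ => (√r : ℂ)) X hX
  rw [mconj_selMatrix] at h
  convert h using 1
  ext i j
  simp [← Complex.ofReal_mul, Real.mul_self_sqrt hr]

variable (𝒮) in
lemma smul_unit_mem_pos {r : ℝ} (hr : 0 ≤ r) :
    (r : ℂ) • diagonal (fun _ : ι => 𝒮.unit) ∈ 𝒮.pos ι :=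
  𝒮.smul_mem_pos hr (𝒮.unit_pos ι)

variable (𝒮) in
lemma eq_zero_of_mem_pos_of_neg_mem_pos {X : Matrix ι ι V} (hX : X ∈ 𝒮.pos ι)
    (hX' : -X ∈ 𝒮.pos ι) : X = 0 := by
  -- compressing `±X` to the vector `e_i + c e_j` gives `±q` with `q` below, so `q = 0`
  have key : ∀ i j (c : ℂ),
      X i i + star c • X i j + c • X j i + (c * star c) • X j j = 0 := by
    intro i j c
    have compress := fun Y (hY : Y ∈ 𝒮.pos ι) => 𝒮.pos_conj ι (Fin 1)
      (selMatrix (fun _ => i) (fun _ => 1) + selMatrix (fun _ => j) (fun _ => c)) Y hY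
    refine 𝒮.proper _ ?_ ?_
    · convert compress X hX using 1
      ext
      simp [mconj_add_selMatrix]
    · convert compress (-X) hX' using 1
      ext
      simp only [mconj_add_selMatrix, RCLike.star_def, neg_add_rev, of_apply, star_one, mul_one,
        Matrix.neg_apply, smul_neg, one_smul, one_mul]
      abel
  have hdiag : ∀ i, X i i = 0 := fun i => by simpa using key i i 0
  ext i j
  have h1 := key i j 1
  have hI := key i j Complex.I
  simp only [hdiag, star_one, one_smul, zero_add, add_zero, smul_zero] at h1 hI
  have h2I : (2 * Complex.I) • X i j = 0 := by
    rw [Complex.star_def, Complex.conj_I] at hI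
    linear_combination (norm := module) Complex.I • h1 - hI
  simpa using h2I

lemma normLE_iff_normBlock_mem_pos {X : Matrix ι κ V} {r : ℝ} :
    𝒮.normLE X r ↔ 𝒮.normBlock X r ∈ 𝒮.pos (ι ⊕ κ) := Iff.rfl

lemma normLE_zero {r : ℝ} (hr : 0 ≤ r) : 𝒮.normLE (0 : Matrix ι κ V) r := by
  rw [normLE_iff_normBlock_mem_pos, normBlock_zero]
  exact 𝒮.smul_unit_mem_pos hr

lemma normLE_add {X Y : Matrix ι κ V} {r s : ℝ} (hX : 𝒮.normLE X r) (hY : 𝒮.normLE Y s) :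
    𝒮.normLE (X + Y) (r + s) := by
  rw [normLE_iff_normBlock_mem_pos, normBlock_add]
  exact 𝒮.pos_add _ _ _ hX hY

lemma normLE_mono {X : Matrix ι κ V} {r s : ℝ} (hX : 𝒮.normLE X r) (hrs : r ≤ s) :
    𝒮.normLE X s := by
  simpa using normLE_add hX (normLE_zero (ι := ι) (κ := κ) (sub_nonneg.2 hrs))

lemma normLE_smul {X : Matrix ι κ V} {r c : ℝ} (hc : 0 ≤ c) (hX : 𝒮.normLE X r) :
    𝒮.normLE ((c : ℂ) • X) (c * r) := by
  rw [normLE_iff_normBlock_mem_pos, normBlock_smul]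
  exact 𝒮.smul_mem_pos hc hX

lemma normLE_neg {X : Matrix ι κ V} {r : ℝ} (hX : 𝒮.normLE X r) : 𝒮.normLE (-X) r := by
  have h := 𝒮.pos_conj _ _ (selMatrix id (Sum.elim (fun _ : ι => (1 : ℂ)) fun _ : κ => -1)) _ hX
  rw [mconj_selMatrix] at h
  rw [normLE_iff_normBlock_mem_pos]
  convert h using 1
  ext (i | i) (j | j) <;> simp [normBlock, mstar_eq_conjTranspose]

lemma normLE_mstar {X : Matrix ι κ V} {r : ℝ} (hX : 𝒮.normLE X r) : 𝒮.normLE (mstar X) r := by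
  have h := 𝒮.pos_conj _ _ (selMatrix (Sum.swap : κ ⊕ ι → ι ⊕ κ) fun _ => 1) _ hX
  rw [mconj_selMatrix] at h
  rw [normLE_iff_normBlock_mem_pos]
  convert h using 1
  ext (i | i) (j | j) <;> simp [normBlock, mstar_eq_conjTranspose]

lemma normLE_of_forall_pos_add {X : Matrix ι κ V} {r : ℝ}
    (h : ∀ ε : ℝ, 0 < ε → 𝒮.normLE X (r + ε)) : 𝒮.normLE X r :=
  𝒮.archimedean _ (𝒮.normBlock X r) (mstar_normBlock X r) fun ε hε => by
    rw [normBlock_add_smul_unit]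
    exact h ε hε

lemma exists_normLE (X : Matrix ι κ V) : ∃ r, 0 ≤ r ∧ 𝒮.normLE X r := by
  obtain ⟨r, hr, hpos⟩ := 𝒮.order_unit _ _ (mstar_normBlock (𝒮 := 𝒮) X 0)
  have h : 𝒮.normLE (-X) r := by
    rw [normLE_iff_normBlock_mem_pos]
    convert hpos using 1
    ext (i | i) (j | j) <;> simp [normBlock, diagonal_apply, mstar_eq_conjTranspose]
  exact ⟨r, hr.le, by simpa using normLE_neg h⟩

lemma normLE_entry {X : Matrix ι κ V} {r : ℝ} (hX : 𝒮.normLE X r) (i : ι) (j : κ) :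
    𝒮.elemNormLE (X i j) r := by
  have h := 𝒮.pos_conj _ _
    (selMatrix (Sum.map (fun _ : Fin 1 => i) fun _ : Fin 1 => j) fun _ => 1) _ hX
  rw [mconj_selMatrix] at h
  rw [elemNormLE, normLE_iff_normBlock_mem_pos]
  convert h using 1
  ext (a | a) (b | b) <;> simp [normBlock, Subsingleton.elim a b, mstar_eq_conjTranspose]

lemma normLE_single {x : V} {r : ℝ} (hx : 𝒮.elemNormLE x r) (hr : 0 ≤ r) (i : ι) (j : κ) :
    𝒮.normLE (single i j x) r := by
  -- spread the `2 × 2` block of `x` onto rows `i`, `j`, and fill the rest of the diagonal with `r`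
  have hblock := 𝒮.pos_conj _ _ (selMatrix (Sum.map (fun _ : ι => (0 : Fin 1)) fun _ : κ => 0)
    (Sum.elim (fun a => if a = i then 1 else 0) fun b => if b = j then 1 else 0)) _ hx
  have hdiag := 𝒮.pos_conj _ _ (selMatrix id
    (Sum.elim (fun a => if a = i then 0 else (√r : ℂ)) fun b => if b = j then 0 else (√r : ℂ)))
    _ (𝒮.unit_pos (ι ⊕ κ))
  rw [mconj_selMatrix] at hblock hdiag
  rw [normLE_iff_normBlock_mem_pos]
  convert 𝒮.pos_add _ _ _ hblock hdiag using 1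
  have hsqrt : (√r : ℂ) * (√r : ℂ) = r := by rw [← Complex.ofReal_mul, Real.mul_self_sqrt hr]
  clear hblock hdiag
  ext (a | a) (b | b) <;>
    simp only [normBlock, single, mstar_eq_conjTranspose, Complex.coe_smul, fromBlocks_apply₁₁,
      fromBlocks_apply₁₂, fromBlocks_apply₂₁, fromBlocks_apply₂₂, conjTranspose_apply,
      Matrix.smul_apply, Matrix.add_apply, of_apply, diagonal_apply, id_eq,
      Sum.elim_inl, Sum.elim_inr, Sum.map_inl, Sum.map_inr, Sum.inl.injEq, Sum.inr.injEq,
      reduceCtorEq, ↓reduceIte, RCLike.star_def, MonoidWithZeroHom.map_ite_one_zero, smul_ite,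
      ite_smul, ite_mul, mul_ite, smul_zero, zero_smul, one_smul, mul_one, mul_zero, zero_mul,
      add_zero] <;>
    split_ifs <;> simp_all [Complex.coe_smul]

lemma normLE_sum {A : Type} {s : Finset A} {X : A → Matrix ι κ V} {r : A → ℝ}
    (h : ∀ a ∈ s, 𝒮.normLE (X a) (r a)) : 𝒮.normLE (∑ a ∈ s, X a) (∑ a ∈ s, r a) := by
  induction s using Finset.cons_induction with
  | empty => exact normLE_zero le_rfl
  | cons a s ha ih =>
    rw [Finset.sum_cons, Finset.sum_cons]
    exact normLE_add (h a (Finset.mem_cons_self a s))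
      (ih fun b hb => h b (Finset.mem_cons_of_mem hb))

lemma eq_zero_of_forall_normLE {X : Matrix ι κ V} (h : ∀ ε : ℝ, 0 < ε → 𝒮.normLE X ε) :
    X = 0 := by
  have hX : 𝒮.normLE X 0 := normLE_of_forall_pos_add fun ε hε => by simpa using h ε hε
  have hneg : 𝒮.normBlock (-X) 0 = -𝒮.normBlock X 0 := by
    ext (i | i) (j | j) <;> simp [normBlock, mstar_eq_conjTranspose]
  have h0 := 𝒮.eq_zero_of_mem_pos_of_neg_mem_pos hX (hneg ▸ normLE_neg hX)
  ext i j
  simpa [normBlock] using congrFun (congrFun h0 (Sum.inl i)) (Sum.inr j)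

lemma mstar_eq_of_forall_normLE_sub {u : ℕ → Matrix ι ι V} {Y : Matrix ι ι V}
    (hu : ∀ k, mstar (u k) = u k)
    (hY : ∀ ε : ℝ, 0 < ε → ∃ N, ∀ k ≥ N, 𝒮.normLE (u k - Y) ε) : mstar Y = Y := by
  refine sub_eq_zero.1 (eq_zero_of_forall_normLE (𝒮 := 𝒮) fun ε hε => ?_)
  obtain ⟨N, hN⟩ := hY (ε / 2) (by positivity)
  have h := normLE_add (normLE_neg (normLE_mstar (hN N le_rfl))) (hN N le_rfl)
  rw [mstar_sub, hu] at h
  convert h using 1 <;> [abel; ring]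

lemma add_smul_unit_mem_pos_of_normLE {X : Matrix ι ι V} {r : ℝ} (hX : 𝒮.normLE X r)
    (hsa : mstar X = X) : X + (r : ℂ) • diagonal (fun _ => 𝒮.unit) ∈ 𝒮.pos ι := by
  -- compressing `normBlock X r` by `[1 1]` gives `2 (X + r 1)`
  have h := 𝒮.pos_conj _ _ (selMatrix Sum.inl (fun _ : ι => 1) + selMatrix Sum.inr fun _ => 1) _ hX
  convert 𝒮.smul_mem_pos (r := 1 / 2) (by norm_num) h using 1
  ext i j
  have hij : star (X j i) = X i j := congrFun (congrFun hsa i) j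
  simp only [mconj_add_selMatrix, mstar_eq_conjTranspose, Complex.coe_smul, Matrix.add_apply,
    Matrix.smul_apply, one_div, Complex.ofReal_inv, Complex.ofReal_ofNat, star_one, mul_one,
    fromBlocks_apply₁₁, one_smul, fromBlocks_apply₁₂, fromBlocks_apply₂₁, conjTranspose_apply,
    fromBlocks_apply₂₂, of_apply, hij, smul_add]
  module

lemma add_add_smul_unit_mem_pos {x x' : Matrix ι ι V} {ε δ : ℝ}
    (hx : x + (ε : ℂ) • diagonal (fun _ => 𝒮.unit) ∈ 𝒮.pos ι)
    (hx' : x' + (δ : ℂ) • diagonal (fun _ => 𝒮.unit) ∈ 𝒮.pos ι) :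
    x + x' + ((ε + δ : ℝ) : ℂ) • diagonal (fun _ => 𝒮.unit) ∈ 𝒮.pos ι := by
  convert 𝒮.pos_add _ _ _ hx hx' using 1
  push_cast
  module

lemma normLE_of_forall_entry {X : Matrix ι κ V} {r : ℝ} (hr : 0 ≤ r)
    (h : ∀ i j, 𝒮.elemNormLE (X i j) r) :
    𝒮.normLE X (Fintype.card ι * Fintype.card κ * r) := by
  rw [matrix_eq_sum_single X]
  convert normLE_sum fun i _ => normLE_sum fun j _ => normLE_single (h i j) hr i j using 1
  simp [mul_assoc]

lemma normLE_real_smul {X : Matrix ι κ V} {r : ℝ} (c : ℝ) (hX : 𝒮.normLE X r) :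
    𝒮.normLE ((c : ℂ) • X) (|c| * r) := by
  rcases le_or_gt 0 c with hc | hc
  · simpa [abs_of_nonneg hc] using normLE_smul hc hX
  · simpa [abs_of_neg hc] using normLE_neg (normLE_smul (neg_nonneg.2 hc.le) hX)

variable (𝒮) in
noncomputable def matrixNorm (X : Matrix ι κ V) : ℝ :=
  sInf {r | 0 ≤ r ∧ 𝒮.normLE X r}

lemma matrixNorm_nonneg (X : Matrix ι κ V) : 0 ≤ 𝒮.matrixNorm X :=
  le_csInf (exists_normLE X) fun _ hr => hr.1

lemma matrixNorm_le {X : Matrix ι κ V} {r : ℝ} (hr : 0 ≤ r) (h : 𝒮.normLE X r) :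
    𝒮.matrixNorm X ≤ r :=
  csInf_le ⟨0, fun _ hs => hs.1⟩ ⟨hr, h⟩

lemma normLE_matrixNorm (X : Matrix ι κ V) : 𝒮.normLE X (𝒮.matrixNorm X) :=
  normLE_of_forall_pos_add fun _ hε =>
    let ⟨_, ha, hlt⟩ := Real.lt_sInf_add_pos (exists_normLE X) hε
    normLE_mono ha.2 hlt.le

lemma normLE_iff_matrixNorm_le {X : Matrix ι κ V} {r : ℝ} (hr : 0 ≤ r) :
    𝒮.normLE X r ↔ 𝒮.matrixNorm X ≤ r :=
  ⟨matrixNorm_le hr, normLE_mono (normLE_matrixNorm X)⟩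

variable (𝒮 ι κ) in
noncomputable abbrev matrixNormedAddCommGroup : NormedAddCommGroup (Matrix ι κ V) :=
  AddGroupNorm.toNormedAddCommGroup
    { toFun := 𝒮.matrixNorm
      map_zero' := le_antisymm (matrixNorm_le le_rfl (normLE_zero le_rfl)) (matrixNorm_nonneg 0)
      add_le' := fun X Y => matrixNorm_le (add_nonneg (matrixNorm_nonneg X) (matrixNorm_nonneg Y))
        (normLE_add (normLE_matrixNorm X) (normLE_matrixNorm Y))
      neg' := fun X => le_antisymm
        (matrixNorm_le (matrixNorm_nonneg X) (normLE_neg (normLE_matrixNorm X)))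
        (matrixNorm_le (matrixNorm_nonneg (-X))
          (by simpa using normLE_neg (normLE_matrixNorm (-X))))
      eq_zero_of_map_eq_zero' := fun X hX => eq_zero_of_forall_normLE fun _ hε =>
        normLE_mono (normLE_matrixNorm X) (hX.le.trans hε.le) }

variable (𝒮 ι κ) in
noncomputable abbrev matrixNormedSpace :
    letI := 𝒮.matrixNormedAddCommGroup ι κ
    NormedSpace ℝ (Matrix ι κ V) :=
  letI := 𝒮.matrixNormedAddCommGroup ι κ
  { norm_smul_le := fun c X => by
      have h := matrixNorm_le (mul_nonneg (abs_nonneg c) (matrixNorm_nonneg X))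
        (normLE_real_smul c (normLE_matrixNorm (𝒮 := 𝒮) X))
      rwa [Complex.coe_smul] at h }

lemma completeSpace_matrix (h : 𝒮.CompleteNorms) :
    letI := 𝒮.matrixNormedAddCommGroup ι κ
    CompleteSpace (Matrix ι κ V) := by
  let := 𝒮.matrixNormedAddCommGroup ι κ
  refine Metric.complete_of_cauchySeq_tendsto fun u hu => ?_
  rw [Metric.cauchySeq_iff] at hu
  have hentry : ∀ i j, ∃ x : V, ∀ ε : ℝ, 0 < ε → ∃ N, ∀ p ≥ N, 𝒮.elemNormLE (u p i j - x) ε := by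
    refine fun i j => h _ fun ε hε => ?_
    obtain ⟨N, hN⟩ := hu ε hε
    refine ⟨N, fun p hp q hq => ?_⟩
    have hpq : 𝒮.normLE (u p - u q) ε :=
      (normLE_iff_matrixNorm_le hε.le).2 (dist_eq_norm (u p) (u q) ▸ hN p hp q hq).le
    exact normLE_entry hpq i j
  choose x hx using hentry
  refine ⟨of x, Metric.tendsto_atTop.2 fun ε hε => ?_⟩
  set c : ℝ := Fintype.card ι * Fintype.card κ
  have hδ : 0 < ε / (c + 1) := by positivity
  choose N hN using fun i j => hx i j _ hδ
  refine ⟨Finset.univ.sup fun p : ι × κ => N p.1 p.2, fun m hm => ?_⟩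
  have hmN : ∀ i j, N i j ≤ m := fun i j =>
    (Finset.le_sup (f := fun p : ι × κ => N p.1 p.2) (Finset.mem_univ (i, j))).trans hm
  have hbound : 𝒮.normLE (u m - of x) (c * (ε / (c + 1))) :=
    normLE_of_forall_entry hδ.le fun i j => hN i j m (hmN i j)
  calc dist (u m) (of x) = 𝒮.matrixNorm (u m - of x) := dist_eq_norm _ _
    _ ≤ c * (ε / (c + 1)) := matrixNorm_le (by positivity) hbound
    _ < ε := by
      rw [mul_div_assoc', div_lt_iff₀ (by positivity)]
      nlinarith

end OpSys

section MapsPreservingStar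

open ComplexStarModule

variable {V W : Type} [AddCommGroup V] [Module ℂ V] [StarAddMonoid V] [StarModule ℂ V]
  [AddCommGroup W] [Module ℂ W] [StarAddMonoid W] [StarModule ℂ W]

lemma LinearMap.map_star_of_map_isSelfAdjoint {f : V →ₗ[ℂ] W}
    (hf : ∀ x, IsSelfAdjoint x → IsSelfAdjoint (f x)) (x : V) : f (star x) = star (f x) := by
  have ha := (ℜ x).2
  have hb := (ℑ x).2
  rw [← realPart_add_I_smul_imaginaryPart x]
  simp only [star_add, star_smul, map_add, map_smul, ha.star_eq, hb.star_eq,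
    (hf _ ha).star_eq, (hf _ hb).star_eq]

end MapsPreservingStar

namespace IsUCPmap

variable {V W : Type} [AddCommGroup V] [Module ℂ V] [StarAddMonoid V] [StarModule ℂ V]
  [AddCommGroup W] [Module ℂ W] [StarAddMonoid W] [StarModule ℂ W]
  {𝒮 : OpSys V} {𝒯 : OpSys W} {Φ : V →ₗ[ℂ] W} {ι κ : Type}

lemma map_isSelfAdjoint (hΦ : IsUCPmap 𝒮 𝒯 Φ) {x : V} (hx : IsSelfAdjoint x) :
    IsSelfAdjoint (Φ x) := by
  -- `r 1 - x ≥ 0` for some `r`, and `Φ (r 1 - x) = r 1 - Φ x` is positive, hence selfadjoint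
  obtain ⟨r, -, hpos⟩ := 𝒮.order_unit (Fin 1) (of fun _ _ => x) (by ext; simp [mstar, hx.star_eq])
  have h := congrFun (congrFun (𝒯.pos_star _ _ (hΦ.2 _ _ hpos)) 0) 0
  simpa [isSelfAdjoint_iff, mstar, hΦ.1, 𝒯.unit_star] using h

lemma map_star (hΦ : IsUCPmap 𝒮 𝒯 Φ) (x : V) : Φ (star x) = star (Φ x) :=
  Φ.map_star_of_map_isSelfAdjoint (fun _ => hΦ.map_isSelfAdjoint) x

lemma map_mstar (hΦ : IsUCPmap 𝒮 𝒯 Φ) (X : Matrix ι κ V) :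
    (mstar X).map Φ = mstar (X.map Φ) := by
  ext i j
  simp [mstar, hΦ.map_star]

lemma map_smul_unit [DecidableEq ι] (hΦ : IsUCPmap 𝒮 𝒯 Φ) (r : ℝ) :
    ((r : ℂ) • diagonal fun _ : ι => 𝒮.unit).map Φ = (r : ℂ) • diagonal fun _ => 𝒯.unit := by
  ext i j
  by_cases h : i = j <;> simp [h, hΦ.1]

lemma map_normBlock [DecidableEq ι] [DecidableEq κ] (hΦ : IsUCPmap 𝒮 𝒯 Φ)
    (X : Matrix ι κ V) (r : ℝ) : (𝒮.normBlock X r).map Φ = 𝒯.normBlock (X.map Φ) r := by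
  simp only [OpSys.normBlock, ← hΦ.map_mstar, ← hΦ.map_smul_unit]
  ext (i | i) (j | j) <;> rfl

variable [Fintype ι] [DecidableEq ι] [Fintype κ] [DecidableEq κ]

lemma normLE_map (hΦ : IsUCPmap 𝒮 𝒯 Φ) {X : Matrix ι κ V} {r : ℝ} (hX : 𝒮.normLE X r) :
    𝒯.normLE (X.map Φ) r := by
  rw [OpSys.normLE_iff_normBlock_mem_pos, ← hΦ.map_normBlock]
  exact hΦ.2 _ _ hX

lemma exists_lift_normLE (hΦ : IsUCPmap 𝒮 𝒯 Φ) (hsurj : Function.Surjective Φ)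
    (hS : 𝒮.CompleteNorms) (hT : 𝒯.CompleteNorms) :
    ∃ C > 0, ∀ (Q : Matrix ι κ W) (r : ℝ), 0 ≤ r → 𝒯.normLE Q r →
      ∃ P : Matrix ι κ V, P.map Φ = Q ∧ 𝒮.normLE P (C * r) := by
  let := 𝒮.matrixNormedAddCommGroup ι κ
  let := 𝒯.matrixNormedAddCommGroup ι κ
  let := 𝒮.matrixNormedSpace ι κ
  let := 𝒯.matrixNormedSpace ι κ
  have := 𝒮.completeSpace_matrix (ι := ι) (κ := κ) hS
  have := 𝒯.completeSpace_matrix (ι := ι) (κ := κ) hT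
  let F : Matrix ι κ V →L[ℝ] Matrix ι κ W :=
    ((Φ.mapMatrix).restrictScalars ℝ).mkContinuous 1 fun X =>
      (one_mul ‖X‖).symm ▸ OpSys.matrixNorm_le (OpSys.matrixNorm_nonneg X)
        (hΦ.normLE_map (OpSys.normLE_matrixNorm X))
  have hF : Function.Surjective F := fun Q =>
    ⟨Q.map (Function.surjInv hsurj), by ext; exact Function.surjInv_eq hsurj _⟩
  obtain ⟨C, hC, hlift⟩ := F.exists_preimage_norm_le hF
  refine ⟨C, hC, fun Q r hr hQ => ?_⟩
  obtain ⟨P, hPQ, hP⟩ := hlift Q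
  exact ⟨P, hPQ, (OpSys.normLE_iff_matrixNorm_le (by positivity)).2
    (hP.trans (mul_le_mul_of_nonneg_left (OpSys.matrixNorm_le hr hQ) hC.le))⟩

lemma exists_selfAdjoint_lift_normLE (hΦ : IsUCPmap 𝒮 𝒯 Φ) (hsurj : Function.Surjective Φ)
    (hS : 𝒮.CompleteNorms) (hT : 𝒯.CompleteNorms) :
    ∃ C > 0, ∀ (Q : Matrix ι ι W) (r : ℝ), 0 ≤ r → 𝒯.normLE Q r → mstar Q = Q →
      ∃ P : Matrix ι ι V, mstar P = P ∧ P.map Φ = Q ∧ 𝒮.normLE P (C * r) := by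
  obtain ⟨C, hC, hlift⟩ := hΦ.exists_lift_normLE (ι := ι) (κ := ι) hsurj hS hT
  refine ⟨C, hC, fun Q r hr hQ hsa => ?_⟩
  obtain ⟨P, hPQ, hP⟩ := hlift Q r hr hQ
  refine ⟨((1 / 2 : ℝ) : ℂ) • (P + mstar P), ?_, ?_, ?_⟩
  · simp only [mstar_eq_conjTranspose, conjTranspose_smul, conjTranspose_add,
      conjTranspose_conjTranspose, Complex.star_def, Complex.conj_ofReal, add_comm]
  · rw [Matrix.map_smul _ _ (map_smul Φ _), Matrix.map_add _ (map_add Φ), hΦ.map_mstar, hPQ, hsa]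
    push_cast
    module
  · convert OpSys.normLE_smul (c := 1 / 2) (by norm_num)
      (OpSys.normLE_add hP (OpSys.normLE_mstar hP)) using 1
    ring

end IsUCPmap

section liftCone

variable {V W : Type} [AddCommGroup V] [Module ℂ V] [StarAddMonoid V] [StarModule ℂ V]
  [AddCommGroup W] [Module ℂ W] [StarAddMonoid W] [StarModule ℂ W]
  {𝒮 : OpSys V} {𝒯 : OpSys W} {Φ : V →ₗ[ℂ] W} {n : ℕ}

lemma liftCone_subset_pos (hΦ : IsUCPmap 𝒮 𝒯 Φ) : liftCone 𝒮 𝒯 Φ n ⊆ 𝒯.pos (Fin n) := by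
  intro y hy
  have hlevel : ∀ ε : ℝ, 0 < ε → y + (ε : ℂ) • diagonal (fun _ => 𝒯.unit) ∈ 𝒯.pos (Fin n) := by
    intro ε hε
    obtain ⟨x, hx, rfl⟩ := hy ε hε
    have h := hΦ.2 _ _ hx
    rwa [Matrix.map_add _ (map_add Φ), hΦ.map_smul_unit] at h
  have hsa : mstar y = y := by
    have h := 𝒯.pos_star _ _ (hlevel 1 one_pos)
    rwa [mstar_add, mstar_eq_conjTranspose (_ • _), 𝒯.conjTranspose_smul_unit, add_left_inj] at h
  exact 𝒯.archimedean _ y hsa hlevel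

lemma map_mem_liftCone {X : Matrix (Fin n) (Fin n) V} (hX : X ∈ 𝒮.pos (Fin n)) :
    X.map Φ ∈ liftCone 𝒮 𝒯 Φ n :=
  fun _ hε => ⟨X, 𝒮.pos_add _ _ _ hX (𝒮.smul_unit_mem_pos hε.le), rfl⟩

lemma add_mem_liftCone {y z : Matrix (Fin n) (Fin n) W} (hy : y ∈ liftCone 𝒮 𝒯 Φ n)
    (hz : z ∈ liftCone 𝒮 𝒯 Φ n) : y + z ∈ liftCone 𝒮 𝒯 Φ n := by
  intro ε hε
  obtain ⟨x, hx, rfl⟩ := hy (ε / 2) (by positivity)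
  obtain ⟨x', hx', rfl⟩ := hz (ε / 2) (by positivity)
  refine ⟨x + x', ?_, Matrix.map_add _ (map_add Φ) x x'⟩
  simpa using OpSys.add_add_smul_unit_mem_pos hx hx'

lemma smul_mem_liftCone {r : ℝ} (hr : 0 ≤ r) {y : Matrix (Fin n) (Fin n) W}
    (hy : y ∈ liftCone 𝒮 𝒯 Φ n) : (r : ℂ) • y ∈ liftCone 𝒮 𝒯 Φ n := by
  rcases hr.eq_or_lt with rfl | hr
  · simpa using map_mem_liftCone (Φ := Φ) (𝒯 := 𝒯) (𝒮.smul_unit_mem_pos (ι := Fin n) le_rfl)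
  intro ε hε
  obtain ⟨x, hx, rfl⟩ := hy (ε / r) (by positivity)
  refine ⟨(r : ℂ) • x, ?_, Matrix.map_smul _ _ (map_smul Φ _) x⟩
  convert 𝒮.smul_mem_pos hr.le hx using 1
  rw [smul_add, smul_smul, ← Complex.ofReal_mul, mul_div_cancel₀ _ hr.ne']

lemma mem_liftCone_of_forall_normLE_sub (hΦ : IsUCPmap 𝒮 𝒯 Φ) (hsurj : Function.Surjective Φ)
    (hS : 𝒮.CompleteNorms) (hT : 𝒯.CompleteNorms) {u : ℕ → Matrix (Fin n) (Fin n) W}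
    {Y : Matrix (Fin n) (Fin n) W} (hu : ∀ k, u k ∈ liftCone 𝒮 𝒯 Φ n)
    (hY : ∀ ε : ℝ, 0 < ε → ∃ N, ∀ k ≥ N, 𝒯.normLE (u k - Y) ε) : Y ∈ liftCone 𝒮 𝒯 Φ n := by
  obtain ⟨C, hC, hlift⟩ := hΦ.exists_selfAdjoint_lift_normLE (ι := Fin n) hsurj hS hT
  have husa k : mstar (u k) = u k := 𝒯.pos_star _ _ (liftCone_subset_pos hΦ (hu k))
  have hYsa : mstar Y = Y := OpSys.mstar_eq_of_forall_normLE_sub husa hY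
  intro ε hε
  obtain ⟨N, hN⟩ := hY (ε / (2 * C)) (by positivity)
  obtain ⟨x, hx, hxu⟩ := hu N (ε / 2) (by positivity)
  obtain ⟨h, hsa, hhY, hh⟩ := hlift (Y - u N) (ε / (2 * C)) (by positivity)
    (by simpa using OpSys.normLE_neg (hN N le_rfl))
    (by rw [mstar_sub, hYsa, husa])
  rw [show C * (ε / (2 * C)) = ε / 2 by field_simp] at hh
  refine ⟨x + h, ?_, ?_⟩
  · simpa using
      OpSys.add_add_smul_unit_mem_pos hx (OpSys.add_smul_unit_mem_pos_of_normLE hh hsa)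
  · rw [Matrix.map_add _ (map_add Φ), hxu, hhY, add_sub_cancel]

end liftCone

/-- **(from the proof of Theorem 6.1.)** For operator systems with complete norms
and a unital completely positive surjection `Φ : S → T`, the set `C_n` is a
norm-closed cone with `Φₙ(Mₙ(S)⁺) ⊆ C_n ⊆ Mₙ(T)⁺`. -/
theorem liftCone_closed_cone {V W : Type}
    [AddCommGroup V] [Module ℂ V] [StarAddMonoid V] [StarModule ℂ V]
    [AddCommGroup W] [Module ℂ W] [StarAddMonoid W] [StarModule ℂ W]
    (𝒮 : OpSys V) (𝒯 : OpSys W)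
    (hScomp : 𝒮.CompleteNorms) (hTcomp : 𝒯.CompleteNorms)
    (Φ : V →ₗ[ℂ] W) (hucp : IsUCPmap 𝒮 𝒯 Φ) (hsurj : Function.Surjective Φ)
    (n : ℕ) :
    liftCone 𝒮 𝒯 Φ n ⊆ 𝒯.pos (Fin n) ∧
    (∀ X ∈ 𝒮.pos (Fin n), X.map Φ ∈ liftCone 𝒮 𝒯 Φ n) ∧
    (∀ y ∈ liftCone 𝒮 𝒯 Φ n, ∀ z ∈ liftCone 𝒮 𝒯 Φ n,
      y + z ∈ liftCone 𝒮 𝒯 Φ n) ∧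
    (∀ r : ℝ, 0 ≤ r → ∀ y ∈ liftCone 𝒮 𝒯 Φ n,
      (r : ℂ) • y ∈ liftCone 𝒮 𝒯 Φ n) ∧
    (∀ (u : ℕ → Matrix (Fin n) (Fin n) W) (Y : Matrix (Fin n) (Fin n) W),
      (∀ k, u k ∈ liftCone 𝒮 𝒯 Φ n) →
      (∀ ε : ℝ, 0 < ε → ∃ N, ∀ k ≥ N, 𝒯.normLE (u k - Y) ε) →
      Y ∈ liftCone 𝒮 𝒯 Φ n) := by
  exact ⟨liftCone_subset_pos hucp, fun _ => map_mem_liftCone,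
    fun _ hy _ hz => add_mem_liftCone hy hz, fun _ hr _ hy => smul_mem_liftCone hr hy,
    fun _ _ hu hY => mem_liftCone_of_forall_normLE_sub hucp hsurj hScomp hTcomp hu hY⟩
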